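/- For m ≥ 2, the distinguishing index of the Mycielskian of the star K_{1,m} satisfies Dist′(μ(K_{1,m})) ≤ r, where r is the minimum natural number such that r² ≥ m + 1. -/

import Mathlib

open SimpleGraph

universe u

/-- A distinguishing edge coloring: no nontrivial automorphism preserves the coloring. -/
def IsDistEdgeColoring {V : Type u} (G : SimpleGraph V) {C : Type*} (c : G.edgeSet → C) : Prop :=
  ∀ φ : G ≃g G, (∀ e : G.edgeSet, c (φ.mapEdgeSet e) = c e) → ∀ v, φ v = v

/-- The distinguishing index: least number of colors in a distinguishing edge coloring. -/
noncomputable def distIndex {V : Type u} (G : SimpleGraph V) : ℕ :=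
  sInf {k : ℕ | ∃ c : G.edgeSet → Fin k, IsDistEdgeColoring G c}

/-- The star `K_{1,m}` with center `0`. -/
def starGraph (m : ℕ) : SimpleGraph (Fin (m + 1)) :=
  SimpleGraph.fromRel fun a _ => a = 0

/-- The Mycielskian: `Sum.inl a` are original vertices, `Sum.inr (Sum.inl a)` their
shadows, and `Sum.inr (Sum.inr _)` the root. -/
def myc {V : Type u} (G : SimpleGraph V) : SimpleGraph (V ⊕ V ⊕ PUnit.{u+1}) :=
  SimpleGraph.fromRel fun x y =>
    match x, y with
    | Sum.inl a, Sum.inl b => G.Adj a b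
    | Sum.inl a, Sum.inr (Sum.inl b) => G.Adj a b
    | Sum.inr (Sum.inl _), Sum.inr (Sum.inr _) => True
    | _, _ => False

/-- The generalized Mycielskian with `t` extra levels: `Sum.inl (j, a)` is the level-`j`
copy of vertex `a` (level `0` being the original vertices), and `Sum.inr _` is the root. -/
def genMyc {V : Type u} (G : SimpleGraph V) (t : ℕ) :
    SimpleGraph ((Fin (t + 1) × V) ⊕ PUnit.{u+1}) :=
  SimpleGraph.fromRel fun x y =>
    match x, y with
    | Sum.inl (j, a), Sum.inl (k, b) =>
        ((j.val = 0 ∧ k.val = 0) ∨ k.val = j.val + 1) ∧ G.Adj a b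
    | Sum.inl (j, _), Sum.inr _ => j.val = t
    | _, _ => False

/-!
In `μ(K_{1,m})` with `m ≥ 2` the vertices with at least three neighbours are the centre `v₀`,
its shadow `u₀` and the root `w`; since only `u₀` and `w` are adjacent among them, every
automorphism fixes `v₀` and fixes or swaps `u₀` and `w`. Code the indices by an injective map
`p : Fin (m + 1) → C × C` (for `C = Fin r` the base-`r` digits, which is where `r² ≥ m + 1` enters)
and colour the edges `v₀vₐ`, `vₐu₀` of a leaf by the two entries of `p (a - 1)` and the edges
`v₀uₐ`, `uₐw` of a shadow by those of `p a`. The leaves are the common neighbours of `v₀` and `u₀`,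
the shadows `uₐ`, `a ≠ 0`, those of `v₀` and `w`, and within each family the colour pairs differ,
so an automorphism fixing `v₀`, `u₀`, `w` and the colouring is the identity. Swapping `u₀` and
`w` is impossible: the leaf `v₁`, coloured by `p 0`, would go to a shadow `u_b`, coloured by `p b`
with `b ≠ 0`.
-/

section DistinguishingColorings

variable {V W C : Type*} {G : SimpleGraph V}

theorem distIndex_le_of_isDistEdgeColoring {k : ℕ} {c : G.edgeSet → Fin k}
    (hc : IsDistEdgeColoring G c) : distIndex G ≤ k :=
  Nat.sInf_le ⟨c, hc⟩

theorem isDistEdgeColoring_lift (F : V → V → C) (hF : ∀ a b, F a b = F b a)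
    (h : ∀ φ : G ≃g G, (∀ x y, G.Adj x y → F (φ x) (φ y) = F x y) → ∀ v, φ v = v) :
    IsDistEdgeColoring G fun e => Sym2.lift ⟨F, hF⟩ e.1 :=
  fun φ hφ => h φ fun x y hxy => hφ ⟨s(x, y), hxy⟩

theorem SimpleGraph.Iso.ncard_neighborSet_apply {G' : SimpleGraph W} (φ : G ≃g G') (v : V) :
    (G'.neighborSet (φ v)).ncard = (G.neighborSet v).ncard := by
  rw [← φ.image_neighborSet, Set.ncard_image_of_injective _ φ.injective]

theorem SimpleGraph.Iso.apply_mem_commonNeighbors {G' : SimpleGraph W} (φ : G ≃g G') {x y z : V}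
    (hz : z ∈ G.commonNeighbors x y) : φ z ∈ G'.commonNeighbors (φ x) (φ y) :=
  ⟨φ.map_adj_iff.2 hz.1, φ.map_adj_iff.2 hz.2⟩

theorem SimpleGraph.Iso.apply_eq_self_of_injOn_commonNeighbors {F : V → V → C} {φ : G ≃g G}
    (hφ : ∀ x y, G.Adj x y → F (φ x) (φ y) = F x y) {x y z : V} (hx : φ x = x) (hy : φ y = y)
    (hinj : Set.InjOn (fun z => (F x z, F y z)) (G.commonNeighbors x y))
    (hz : z ∈ G.commonNeighbors x y) : φ z = z := by
  have hφz := φ.apply_mem_commonNeighbors hz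
  rw [hx, hy] at hφz
  refine hinj hφz hz ?_
  simp only [Prod.mk.injEq]
  rw [← hφ x z hz.1, ← hφ y z hz.2, hx, hy]
  exact ⟨rfl, rfl⟩

end DistinguishingColorings

section Mycielskian

variable {V : Type*} {G : SimpleGraph V} {a b : V} {u u' : PUnit}

@[simp] theorem myc_adj_inl_inl : (myc G).Adj (.inl a) (.inl b) ↔ G.Adj a b := by
  simpa [myc, G.adj_comm b a] using G.ne_of_adj

@[simp] theorem myc_adj_inl_shadow : (myc G).Adj (.inl a) (.inr (.inl b)) ↔ G.Adj a b := by
  simp [myc]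

@[simp] theorem myc_adj_shadow_inl : (myc G).Adj (.inr (.inl a)) (.inl b) ↔ G.Adj a b := by
  simp [myc, G.adj_comm]

@[simp] theorem myc_adj_shadow_shadow : ¬ (myc G).Adj (.inr (.inl a)) (.inr (.inl b)) := by
  simp [myc]

@[simp] theorem myc_adj_inl_root : ¬ (myc G).Adj (.inl a) (.inr (.inr u)) := by
  simp [myc]

@[simp] theorem myc_adj_root_inl : ¬ (myc G).Adj (.inr (.inr u)) (.inl a) := by
  simp [myc]

@[simp] theorem myc_adj_shadow_root : (myc G).Adj (.inr (.inl a)) (.inr (.inr u)) := by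
  simp [myc]

@[simp] theorem myc_adj_root_shadow : (myc G).Adj (.inr (.inr u)) (.inr (.inl a)) := by
  simp [myc]

@[simp] theorem myc_adj_root_root : ¬ (myc G).Adj (.inr (.inr u)) (.inr (.inr u')) := by
  simp [myc]

end Mycielskian

@[simp] theorem starGraph_adj {m : ℕ} {a b : Fin (m + 1)} :
    (_root_.starGraph m).Adj a b ↔ a ≠ b ∧ (a = 0 ∨ b = 0) := by
  simp [_root_.starGraph]

section MycielskianStar

variable {m : ℕ}

theorem myc_starGraph_neighborSet_subset_pair {x : Fin (m + 1) ⊕ Fin (m + 1) ⊕ PUnit}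
    (hx : x ≠ .inl 0 ∧ x ≠ .inr (.inl 0) ∧ x ≠ .inr (.inr ())) :
    ∃ p q, (myc (_root_.starGraph m)).neighborSet x ⊆ {p, q} := by
  rcases x with a | a | ⟨⟩
  · refine ⟨.inl 0, .inr (.inl 0), fun y hy => ?_⟩
    rcases y with b | b | ⟨⟩ <;> simp_all
  · refine ⟨.inl 0, .inr (.inr ()), fun y hy => ?_⟩
    rcases y with b | b | ⟨⟩ <;> simp_all
  · simp at hx

theorem myc_starGraph_two_lt_ncard_neighborSet_iff (hm : 2 ≤ m)
    {x : Fin (m + 1) ⊕ Fin (m + 1) ⊕ PUnit} :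
    2 < ((myc (_root_.starGraph m)).neighborSet x).ncard ↔
      x = .inl 0 ∨ x = .inr (.inl 0) ∨ x = .inr (.inr ()) := by
  constructor
  · intro h
    by_contra! hx
    obtain ⟨p, q, hpq⟩ := myc_starGraph_neighborSet_subset_pair hx
    have := (Set.ncard_le_ncard hpq).trans (Set.ncard_insert_le p {q})
    rw [Set.ncard_singleton] at this
    omega
  · obtain ⟨a, b, ha, hb, hab⟩ : ∃ a b : Fin (m + 1), a ≠ 0 ∧ b ≠ 0 ∧ a ≠ b :=
      ⟨⟨1, by omega⟩, ⟨2, by omega⟩, by simp [Fin.ext_iff]⟩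
    rintro (rfl | rfl | rfl) <;> rw [Set.two_lt_ncard]
    · exact ⟨.inl a, by simp [ha.symm], .inl b, by simp [hb.symm], .inr (.inl a),
        by simp [ha.symm], by simp [hab], by simp, by simp⟩
    · exact ⟨.inl a, by simp [ha.symm], .inl b, by simp [hb.symm], .inr (.inr ()), by simp,
        by simp [hab], by simp, by simp⟩
    · exact ⟨.inr (.inl 0), by simp, .inr (.inl a), by simp, .inr (.inl b), by simp,
        by simp [ha.symm], by simp [hb.symm], by simp [hab]⟩

theorem myc_starGraph_iso_fixes_center_permutes_shadow_root (hm : 2 ≤ m)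
    (φ : myc (_root_.starGraph m) ≃g myc (_root_.starGraph m)) :
    φ (.inl 0) = .inl 0 ∧
      (φ (.inr (.inl 0)) = .inr (.inl 0) ∧ φ (.inr (.inr ())) = .inr (.inr ()) ∨
        φ (.inr (.inl 0)) = .inr (.inr ()) ∧ φ (.inr (.inr ())) = .inr (.inl 0)) := by
  have hbig : ∀ x, (x = .inl 0 ∨ x = .inr (.inl 0) ∨ x = .inr (.inr ())) →
      φ x = .inl 0 ∨ φ x = .inr (.inl 0) ∨ φ x = .inr (.inr ()) := by
    intro x hx
    rwa [← myc_starGraph_two_lt_ncard_neighborSet_iff hm, φ.ncard_neighborSet_apply,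
      myc_starGraph_two_lt_ncard_neighborSet_iff hm]
  have hv := hbig (.inl 0) (by simp)
  have hu := hbig (.inr (.inl 0)) (by simp)
  have hw := hbig (.inr (.inr ())) (by simp)
  have huw : (myc (_root_.starGraph m)).Adj (φ (.inr (.inl 0))) (φ (.inr (.inr ()))) :=
    φ.map_adj_iff.2 (by simp)
  have hvu : φ (.inl 0) ≠ φ (.inr (.inl 0)) := φ.injective.ne (by simp)
  have hvw : φ (.inl 0) ≠ φ (.inr (.inr ())) := φ.injective.ne (by simp)
  rcases hv with hv | hv | hv <;> rcases hu with hu | hu | hu <;> rcases hw with hw | hw | hw <;>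
    simp_all

theorem myc_starGraph_mem_commonNeighbors_center_shadow_zero
    {z : Fin (m + 1) ⊕ Fin (m + 1) ⊕ PUnit} :
    z ∈ (myc (_root_.starGraph m)).commonNeighbors (.inl 0) (.inr (.inl 0)) ↔
      ∃ a ≠ 0, z = .inl a := by
  rcases z with a | a | ⟨⟩ <;> simp [mem_commonNeighbors, eq_comm]

theorem myc_starGraph_mem_commonNeighbors_center_root
    {z : Fin (m + 1) ⊕ Fin (m + 1) ⊕ PUnit} :
    z ∈ (myc (_root_.starGraph m)).commonNeighbors (.inl 0) (.inr (.inr ())) ↔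
      ∃ a ≠ 0, z = .inr (.inl a) := by
  rcases z with a | a | ⟨⟩ <;> simp [mem_commonNeighbors, eq_comm]

variable {C : Type*}

def mycStarColor (p : Fin (m + 1) → C × C) :
    Fin (m + 1) ⊕ Fin (m + 1) ⊕ PUnit → Fin (m + 1) ⊕ Fin (m + 1) ⊕ PUnit → C
  -- on an edge of `K_{1,m}` one of `a`, `b` is the centre `0`, so `a + b` is the leaf
  | .inl a, .inl b => (p (a + b - 1)).1
  | .inl a, .inr (.inl b) | .inr (.inl b), .inl a => if b = 0 then (p (a - 1)).2 else (p b).1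
  | .inr (.inl a), .inr (.inr _) | .inr (.inr _), .inr (.inl a) => (p a).2
  | _, _ => (p 0).1

theorem mycStarColor_comm (p : Fin (m + 1) → C × C) (x y : Fin (m + 1) ⊕ Fin (m + 1) ⊕ PUnit) :
    mycStarColor p x y = mycStarColor p y x := by
  rcases x with a | a | ⟨⟩ <;> rcases y with b | b | ⟨⟩ <;> simp [mycStarColor, add_comm]

theorem mycStarColor_leaf (p : Fin (m + 1) → C × C) (a : Fin (m + 1)) :
    (mycStarColor p (.inl 0) (.inl a), mycStarColor p (.inr (.inl 0)) (.inl a)) = p (a - 1) := by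
  simp [mycStarColor]

theorem mycStarColor_shadow (p : Fin (m + 1) → C × C) {a : Fin (m + 1)} (ha : a ≠ 0) :
    (mycStarColor p (.inl 0) (.inr (.inl a)), mycStarColor p (.inr (.inr ())) (.inr (.inl a))) =
      p a := by
  simp [mycStarColor, ha]

section ColorPreserving

variable {p : Fin (m + 1) → C × C} (hp : p.Injective)
  {φ : myc (_root_.starGraph m) ≃g myc (_root_.starGraph m)}
  (hφ : ∀ x y, (myc (_root_.starGraph m)).Adj x y →
    mycStarColor p (φ x) (φ y) = mycStarColor p x y)
include hp hφ

theorem mycStarColor_iso_eq_self (hv : φ (.inl 0) = .inl 0)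
    (hu : φ (.inr (.inl 0)) = .inr (.inl 0)) (hw : φ (.inr (.inr ())) = .inr (.inr ()))
    (x : Fin (m + 1) ⊕ Fin (m + 1) ⊕ PUnit) :
    φ x = x := by
  have hleaf : ∀ a ≠ 0, φ (.inl a) = .inl a := by
    refine fun a ha => φ.apply_eq_self_of_injOn_commonNeighbors hφ hv hu ?_
      (myc_starGraph_mem_commonNeighbors_center_shadow_zero.2 ⟨a, ha, rfl⟩)
    intro z hz z' hz' hzz'
    obtain ⟨a, -, rfl⟩ := myc_starGraph_mem_commonNeighbors_center_shadow_zero.1 hz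
    obtain ⟨b, -, rfl⟩ := myc_starGraph_mem_commonNeighbors_center_shadow_zero.1 hz'
    simp only [mycStarColor_leaf] at hzz'
    rw [sub_left_inj.1 (hp hzz')]
  have hshadow : ∀ a ≠ 0, φ (.inr (.inl a)) = .inr (.inl a) := by
    refine fun a ha => φ.apply_eq_self_of_injOn_commonNeighbors hφ hv hw ?_
      (myc_starGraph_mem_commonNeighbors_center_root.2 ⟨a, ha, rfl⟩)
    intro z hz z' hz' hzz'
    obtain ⟨a, ha, rfl⟩ := myc_starGraph_mem_commonNeighbors_center_root.1 hz
    obtain ⟨b, hb, rfl⟩ := myc_starGraph_mem_commonNeighbors_center_root.1 hz'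
    simp only [mycStarColor_shadow p ha, mycStarColor_shadow p hb] at hzz'
    rw [hp hzz']
  rcases x with a | a | ⟨⟩
  · rcases eq_or_ne a 0 with rfl | ha
    exacts [hv, hleaf a ha]
  · rcases eq_or_ne a 0 with rfl | ha
    exacts [hu, hshadow a ha]
  · exact hw

theorem mycStarColor_iso_not_swap [NeZero m] (hv : φ (.inl 0) = .inl 0)
    (hu : φ (.inr (.inl 0)) = .inr (.inr ())) : False := by
  have h1 : (1 : Fin (m + 1)) ≠ 0 := Fin.one_pos'.ne'
  have hφ1 := φ.apply_mem_commonNeighbors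
    (myc_starGraph_mem_commonNeighbors_center_shadow_zero.2 ⟨1, h1, rfl⟩)
  rw [hv, hu] at hφ1
  obtain ⟨b, hb, hb1⟩ := myc_starGraph_mem_commonNeighbors_center_root.1 hφ1
  have hpb : p b = p (1 - 1) := by
    rw [← mycStarColor_shadow p hb, ← mycStarColor_leaf p 1,
      ← hφ (.inl 0) (.inl 1) (by simp [h1.symm]), ← hφ (.inr (.inl 0)) (.inl 1) (by simp [h1]),
      hv, hu, hb1]
  exact hb (by simpa using hp hpb)

end ColorPreserving

theorem isDistEdgeColoring_myc_starGraph (hm : 2 ≤ m) {p : Fin (m + 1) → C × C}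
    (hp : p.Injective) :
    IsDistEdgeColoring (myc (_root_.starGraph m))
      fun e => Sym2.lift ⟨mycStarColor p, mycStarColor_comm p⟩ e.1 := by
  have : NeZero m := ⟨by omega⟩
  refine isDistEdgeColoring_lift _ _ fun φ hφ => ?_
  obtain ⟨hv, ⟨hu, hw⟩ | ⟨hu, -⟩⟩ := myc_starGraph_iso_fixes_center_permutes_shadow_root hm φ
  · exact mycStarColor_iso_eq_self hp hφ hv hu hw
  · exact (mycStarColor_iso_not_swap hp hφ hv hu).elim

end MycielskianStar

theorem distIndex_myc_star_le (m : ℕ) (hm : 2 ≤ m) :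
    distIndex (myc (_root_.starGraph m)) ≤ sInf {r : ℕ | m + 1 ≤ r ^ 2} := by
  set r := sInf {r : ℕ | m + 1 ≤ r ^ 2}
  have hr : m + 1 ≤ r * r := by
    rw [← sq]
    exact Nat.sInf_mem (s := {r : ℕ | m + 1 ≤ r ^ 2}) ⟨m + 1, Nat.le_self_pow two_ne_zero _⟩
  let p : Fin (m + 1) → Fin r × Fin r := finProdFinEquiv.symm ∘ Fin.castLE hr
  have hp : p.Injective := finProdFinEquiv.symm.injective.comp (Fin.castLE_injective hr)
  exact distIndex_le_of_isDistEdgeColoring (isDistEdgeColoring_myc_starGraph hm hp)
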